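/- arXiv:2208.14407 — 2 statements merged into one kernel-verified Lean document; each statement's English description precedes it below -/
import Mathlib

section
/- Let M = (S, A, T, R) be a finite MDP with rewards in [0, Rmax], let φ : S → S̄ be a state abstraction, and let M̄ = (S̄, A, T̄, R̄) be an abstract MDP such that for all s̄, s̄' ∈ S̄, all s ∈ S with φ(s) = s̄, and all a ∈ A: |T̄(s̄'|s̄,a) − Σ_{s'∈φ⁻¹(s̄')} T(s'|s,a)| ≤ η_T and |R̄(s̄,a) − R(s,a)| ≤ η_R. Then for every abstract policy π̄ : S̄ → A, every horizon h ≥ 1, and every s ∈ S: |V^{π̄∘φ, h}_M(s) − V̄^{π̄, h}_{M̄}(φ(s))| ≤ h·η_R + ((h−1)·h/2)·η_T·|S̄|·Rmax, where V^{π̄∘φ,h}_M is the h-step value in M of the policy s ↦ π̄(φ(s)) and V̄^{π̄,h}_{M̄} is the h-step value of π̄ in M̄. -/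
/-- Undiscounted `n`-step value of policy `π` in the MDP with transitions `T`
and rewards `R`. -/
noncomputable def Vpol {S A : Type*} [Fintype S] (T : S → A → S → ℝ) (R : S → A → ℝ)
    (π : S → A) : ℕ → S → ℝ
  | 0, _ => 0
  | n + 1, s => R s (π s) + ∑ s' : S, T s (π s) s' * Vpol T R π n s'

lemma Vpol_bounds {S A : Type*} [Fintype S] (T : S → A → S → ℝ) (R : S → A → ℝ)
    (Rmax : ℝ) (hT0 : ∀ s a s', 0 ≤ T s a s') (hT1 : ∀ s a, ∑ s', T s a s' = 1)
    (hR0 : ∀ s a, 0 ≤ R s a) (hR1 : ∀ s a, R s a ≤ Rmax)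
    (π : S → A) : ∀ n s, 0 ≤ Vpol T R π n s ∧ Vpol T R π n s ≤ n * Rmax := by
  intro n
  induction n with
  | zero => intro s; simp [Vpol]
  | succ n ih =>
    intro s
    have h1 : 0 ≤ ∑ s' : S, T s (π s) s' * Vpol T R π n s' :=
      Finset.sum_nonneg fun s' _ => mul_nonneg (hT0 _ _ _) (ih s').1
    have h2 : ∑ s' : S, T s (π s) s' * Vpol T R π n s' ≤ n * Rmax := by
      calc ∑ s' : S, T s (π s) s' * Vpol T R π n s'
          ≤ ∑ s' : S, T s (π s) s' * (n * Rmax) :=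
            Finset.sum_le_sum fun s' _ =>
              mul_le_mul_of_nonneg_left (ih s').2 (hT0 _ _ _)
        _ = n * Rmax := by rw [← Finset.sum_mul, hT1]; ring
    refine ⟨add_nonneg (hR0 _ _) h1, ?_⟩
    have := hR1 s (π s)
    show R s (π s) + _ ≤ _
    push_cast
    linarith

theorem stmt4 {S Sb A : Type*} [Fintype S] [Fintype Sb] [Fintype A]
    [Nonempty S] [Nonempty Sb] [Nonempty A] [DecidableEq Sb]
    -- the ground MDP M = (S, A, T, R), rewards in [0, Rmax]
    (T : S → A → S → ℝ) (R : S → A → ℝ) (Rmax : ℝ) (hRmax : 0 < Rmax)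
    (hT0 : ∀ s a s', 0 ≤ T s a s') (hT1 : ∀ s a, ∑ s', T s a s' = 1)
    (hR0 : ∀ s a, 0 ≤ R s a) (hR1 : ∀ s a, R s a ≤ Rmax)
    -- the state abstraction φ : S → Sb
    (φ : S → Sb) (hφ : Function.Surjective φ)
    -- the abstract MDP M̄ = (Sb, A, Tb, Rb)
    (Tb : Sb → A → Sb → ℝ) (Rb : Sb → A → ℝ)
    (hTb0 : ∀ sb a sb', 0 ≤ Tb sb a sb') (hTb1 : ∀ sb a, ∑ sb', Tb sb a sb' = 1)
    (hRb0 : ∀ sb a, 0 ≤ Rb sb a) (hRb1 : ∀ sb a, Rb sb a ≤ Rmax)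
    -- approximate model similarity between M and M̄
    (ηT ηR : ℝ)
    (hsimT : ∀ s a sb', |Tb (φ s) a sb' -
      ∑ s' ∈ Finset.univ.filter (fun s' => φ s' = sb'), T s a s'| ≤ ηT)
    (hsimR : ∀ s a, |Rb (φ s) a - R s a| ≤ ηR)
    -- any abstract policy and horizon h ≥ 1
    (πb : Sb → A) (h : ℕ) (hh : 1 ≤ h) (s : S) :
    |Vpol T R (fun s => πb (φ s)) h s - Vpol Tb Rb πb h (φ s)|
      ≤ (h : ℝ) * ηR + (((h : ℝ) - 1) * (h : ℝ) / 2) * ηT * (Fintype.card Sb : ℝ) * Rmax := by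
  clear hh
  set π' : S → A := fun s => πb (φ s) with hπ'
  have hηR : 0 ≤ ηR := le_trans (abs_nonneg _) (hsimR s (πb (φ s)))
  have hηT : 0 ≤ ηT := le_trans (abs_nonneg _) (hsimT s (πb (φ s)) (φ s))
  have Vb_bd := Vpol_bounds Tb Rb Rmax hTb0 hTb1 hRb0 hRb1 πb
  induction h generalizing s with
  | zero => simp [Vpol]
  | succ n ih =>
    set a := πb (φ s) with ha
    have regroup : ∑ s' : S, T s a s' * Vpol Tb Rb πb n (φ s')
        = ∑ sb' : Sb, (∑ s' ∈ Finset.univ.filter (fun s' => φ s' = sb'), T s a s')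
            * Vpol Tb Rb πb n sb' := by
      rw [← Finset.sum_fiberwise Finset.univ φ
        (fun s' => T s a s' * Vpol Tb Rb πb n (φ s'))]
      refine Finset.sum_congr rfl fun sb' _ => ?_
      rw [Finset.sum_mul]
      refine Finset.sum_congr rfl fun s' hs' => ?_
      rw [(Finset.mem_filter.mp hs').2]
    have key : Vpol T R π' (n+1) s - Vpol Tb Rb πb (n+1) (φ s)
        = (R s a - Rb (φ s) a)
          + (∑ s' : S, T s a s' * (Vpol T R π' n s' - Vpol Tb Rb πb n (φ s')))
          + (∑ sb' : Sb, ((∑ s' ∈ Finset.univ.filter (fun s' => φ s' = sb'), T s a s')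
              - Tb (φ s) a sb') * Vpol Tb Rb πb n sb') := by
      simp only [Vpol, hπ', ← ha]
      simp only [mul_sub, sub_mul, Finset.sum_sub_distrib]
      rw [regroup]
      ring
    have bA : |∑ s' : S, T s a s' * (Vpol T R π' n s' - Vpol Tb Rb πb n (φ s'))|
        ≤ (n : ℝ) * ηR + (((n : ℝ) - 1) * (n : ℝ) / 2) * ηT * (Fintype.card Sb : ℝ) * Rmax := by
      calc |∑ s' : S, T s a s' * (Vpol T R π' n s' - Vpol Tb Rb πb n (φ s'))|
          ≤ ∑ s' : S, |T s a s' * (Vpol T R π' n s' - Vpol Tb Rb πb n (φ s'))| :=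
            Finset.abs_sum_le_sum_abs _ _
        _ ≤ ∑ s' : S, T s a s' * ((n : ℝ) * ηR + (((n : ℝ) - 1) * (n : ℝ) / 2) * ηT * (Fintype.card Sb : ℝ) * Rmax) := by
            refine Finset.sum_le_sum fun s' _ => ?_
            rw [abs_mul, abs_of_nonneg (hT0 s a s')]
            exact mul_le_mul_of_nonneg_left (ih s') (hT0 s a s')
        _ = _ := by rw [← Finset.sum_mul, hT1]; ring
    have bB : |∑ sb' : Sb, ((∑ s' ∈ Finset.univ.filter (fun s' => φ s' = sb'), T s a s')
              - Tb (φ s) a sb') * Vpol Tb Rb πb n sb'|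
        ≤ (Fintype.card Sb : ℝ) * (ηT * ((n : ℝ) * Rmax)) := by
      calc |∑ sb' : Sb, ((∑ s' ∈ Finset.univ.filter (fun s' => φ s' = sb'), T s a s')
              - Tb (φ s) a sb') * Vpol Tb Rb πb n sb'|
          ≤ ∑ sb' : Sb, |((∑ s' ∈ Finset.univ.filter (fun s' => φ s' = sb'), T s a s')
              - Tb (φ s) a sb') * Vpol Tb Rb πb n sb'| := Finset.abs_sum_le_sum_abs _ _
        _ ≤ ∑ sb' : Sb, ηT * ((n : ℝ) * Rmax) := by
            refine Finset.sum_le_sum fun sb' _ => ?_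
            rw [abs_mul]
            refine mul_le_mul ?_ ?_ (abs_nonneg _) hηT
            · rw [abs_sub_comm]; exact hsimT s a sb'
            · rw [abs_of_nonneg (Vb_bd n sb').1]; exact (Vb_bd n sb').2
        _ = (Fintype.card Sb : ℝ) * (ηT * ((n : ℝ) * Rmax)) := by
            rw [Finset.sum_const, Finset.card_univ]; simp [nsmul_eq_mul]
    have bR : |R s a - Rb (φ s) a| ≤ ηR := by rw [abs_sub_comm]; exact hsimR s a
    have := abs_add_le (R s a - Rb (φ s) a
        + ∑ s' : S, T s a s' * (Vpol T R π' n s' - Vpol Tb Rb πb n (φ s')))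
        (∑ sb' : Sb, ((∑ s' ∈ Finset.univ.filter (fun s' => φ s' = sb'), T s a s')
              - Tb (φ s) a sb') * Vpol Tb Rb πb n sb')
    have h3 := abs_add_le (R s a - Rb (φ s) a)
        (∑ s' : S, T s a s' * (Vpol T R π' n s' - Vpol Tb Rb πb n (φ s')))
    rw [key]
    push_cast
    nlinarith [this, h3, bA, bB, bR]
end

section
/- Let M = (S, A, T_M, R_M) and M_L = (S, A, T_{M_L}, R_{M_L}) be two finite MDPs on the same state and action sets, with rewards in [0, Rmax], let L ⊆ S × A be a set of 'known' state-action pairs, and suppose T_M(·|s,a) = T_{M_L}(·|s,a) and R_M(s,a) = R_{M_L}(s,a) for all (s,a) ∈ L. Fix a policy π : S → A, a start state s₁, and a horizon n. Let Pr(A_M) be the probability, under the trajectory distribution obtained by starting at s₁ and following π for n steps in M, that some state s_t visited during the trial satisfies (s_t, π(s_t)) ∉ L. Then V^{π,n}_M(s₁) ≥ V^{π,n}_{M_L}(s₁) − n·Rmax·Pr(A_M). -/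
set_option maxHeartbeats 1000000
set_option linter.unusedSectionVars false


section Aux

variable {S A : Type*} [Fintype S] [DecidableEq S] [DecidableEq A]

/-- Probability, over `n`-step trajectories of `π` in the MDP with transitions `T`
started at `s`, of visiting some state `s_t` with `(s_t, π s_t) ∉ L`. -/
noncomputable def Esc (T : S → A → S → ℝ) (π : S → A) (L : Finset (S × A)) :
    ℕ → S → ℝ
  | 0, _ => 0
  | n + 1, s =>
      if (s, π s) ∉ L then 1 else ∑ s' : S, T s (π s) s' * Esc T π L n s'

/-- Weight of a path of length `m+1`. -/
noncomputable def W (T : S → A → S → ℝ) (π : S → A) (m : ℕ) (q : Fin (m+1) → S) : ℝ :=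
  ∏ t : Fin m, T (q t.castSucc) (π (q t.castSucc)) (q t.succ)

lemma W_cons (T : S → A → S → ℝ) (π : S → A) (m : ℕ) (s : S) (q : Fin (m+1) → S) :
    W T π (m+1) (Fin.cons s q) = T s (π s) (q 0) * W T π m q := by
  unfold W
  rw [Fin.prod_univ_succ]
  simp [← Fin.succ_castSucc, Fin.cons_succ, Fin.cons_zero]

lemma sum_fin_one (g : (Fin 1 → S) → ℝ) :
    ∑ q : Fin 1 → S, g q = ∑ x : S, g (fun _ => x) := by
  rw [← Equiv.sum_comp (Equiv.funUnique (Fin 1) S).symm g]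
  rfl

lemma step (T : S → A → S → ℝ) (π : S → A) (m : ℕ) (s : S)
    (f : S → (Fin (m+1) → S) → ℝ) :
    ∑ p : Fin (m+2) → S,
      (if p 0 = s then (1:ℝ) else 0) * W T π (m+1) p * f (p 0) (fun t => p t.succ)
    = ∑ s' : S, T s (π s) s' *
        ∑ q : Fin (m+1) → S, (if q 0 = s' then (1:ℝ) else 0) * W T π m q * f s q := by
  rw [← Equiv.sum_comp (Fin.consEquiv (fun _ : Fin (m+2) => S))]
  rw [Fintype.sum_prod_type]
  have h : ∀ (x : S) (y : Fin (m+1) → S),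
      W T π (m+1) ((Fin.consEquiv fun _ : Fin (m+2) => S) (x, y)) =
        T x (π x) (y 0) * W T π m y := fun x y => W_cons T π m x y
  simp only [Fin.consEquiv_apply, Fin.cons_zero, Fin.cons_succ, h]
  rw [Finset.sum_eq_single s]
  · simp only [if_pos rfl, one_mul, Finset.mul_sum]
    rw [Finset.sum_comm]
    refine Finset.sum_congr rfl fun q _ => ?_
    rw [Finset.sum_eq_single (q 0)]
    · simp [mul_assoc, mul_comm, mul_left_comm]
    · intro b _ hb
      simp [show q 0 ≠ b from fun h => hb h.symm]
    · simp
  · intro b _ hb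
    simp [hb]
  · simp

lemma mass (T : S → A → S → ℝ) (π : S → A) (hT1 : ∀ s a, ∑ s', T s a s' = 1) :
    ∀ (m : ℕ) (s : S),
      ∑ q : Fin (m+1) → S, (if q 0 = s then (1:ℝ) else 0) * W T π m q = 1 := by
  intro m
  induction m with
  | zero =>
    intro s
    rw [sum_fin_one]
    simp [W]
  | succ m ih =>
    intro s
    have hstep := step T π m s (fun _ _ => (1:ℝ))
    simp only [mul_one] at hstep
    rw [hstep]
    simp only [ih]
    simpa using hT1 s (π s)

lemma key' (T : S → A → S → ℝ) (π : S → A) (L : Finset (S × A))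
    (hT1 : ∀ s a, ∑ s', T s a s' = 1) :
    ∀ (m : ℕ) (s : S),
      ∑ q : Fin (m+1) → S,
        ((if q 0 = s then (1:ℝ) else 0) * W T π m q) *
          (if ∃ t : Fin (m+1), (q t, π (q t)) ∉ L then 1 else 0)
      = Esc T π L (m+1) s := by
  intro m
  induction m with
  | zero =>
    intro s
    rw [sum_fin_one]
    simp [W, Esc]
    have hx : ∀ x : S, (if (x, π x) ∈ L then (0:ℝ) else if x = s then 1 else 0)
        = if x = s then (if (s, π s) ∈ L then (0:ℝ) else 1) else 0 := by
      intro x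
      by_cases h : x = s
      · subst h; by_cases h2 : (x, π x) ∈ L <;> simp [h2]
      · simp [h, ite_self]
    simp [hx]
  | succ m ih =>
    intro s
    have hind : ∀ p : Fin (m+2) → S,
        (if ∃ t : Fin (m+2), (p t, π (p t)) ∉ L then (1:ℝ) else 0) =
        (fun (x : S) (q : Fin (m+1) → S) =>
          if ((x, π x) ∉ L ∨ ∃ t : Fin (m+1), (q t, π (q t)) ∉ L) then (1:ℝ) else 0)
          (p 0) (fun t => p t.succ) :=
      fun p => if_congr Fin.exists_fin_succ rfl rfl
    calc ∑ p : Fin (m+2) → S,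
          ((if p 0 = s then (1:ℝ) else 0) * W T π (m+1) p) *
            (if ∃ t : Fin (m+2), (p t, π (p t)) ∉ L then 1 else 0)
        = ∑ p : Fin (m+2) → S,
          (if p 0 = s then (1:ℝ) else 0) * W T π (m+1) p *
            (fun (x : S) (q : Fin (m+1) → S) =>
              if ((x, π x) ∉ L ∨ ∃ t : Fin (m+1), (q t, π (q t)) ∉ L) then (1:ℝ) else 0)
              (p 0) (fun t => p t.succ) :=
          Finset.sum_congr rfl fun p _ => by rw [← hind p]
      _ = ∑ s' : S, T s (π s) s' *
            ∑ q : Fin (m+1) → S, (if q 0 = s' then (1:ℝ) else 0) * W T π m q *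
              (if ((s, π s) ∉ L ∨ ∃ t : Fin (m+1), (q t, π (q t)) ∉ L) then (1:ℝ) else 0) :=
          step T π m s (fun (x : S) (q : Fin (m+1) → S) =>
            if ((x, π x) ∉ L ∨ ∃ t : Fin (m+1), (q t, π (q t)) ∉ L) then (1:ℝ) else 0)
      _ = Esc T π L (m+2) s := by
          by_cases hL : (s, π s) ∈ L
          · simp only [hL, not_true_eq_false, false_or]
            have : ∀ s' : S,
                (∑ q : Fin (m+1) → S, (if q 0 = s' then (1:ℝ) else 0) * W T π m q *
                  (if ∃ t : Fin (m+1), (q t, π (q t)) ∉ L then (1:ℝ) else 0))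
                = Esc T π L (m+1) s' := fun s' => ih s'
            simp only [this]
            simp [Esc, hL]
          · simp only [hL, not_false_eq_true, true_or, if_true, mul_one]
            simp only [mass T π hT1 m]
            simp [Esc, hL, hT1 s (π s)]


lemma Esc_nonneg (T : S → A → S → ℝ) (π : S → A) (L : Finset (S × A))
    (hT0 : ∀ s a s', 0 ≤ T s a s') :
    ∀ (n : ℕ) (s : S), 0 ≤ Esc T π L n s := by
  intro n
  induction n with
  | zero => intro s; simp [Esc]
  | succ n ih =>
    intro s
    by_cases hL : (s, π s) ∈ L
    · simp only [Esc, hL, not_true_eq_false, if_false]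
      exact Finset.sum_nonneg fun s' _ => mul_nonneg (hT0 _ _ _) (ih s')
    · simp [Esc, hL]

lemma Vpol_nonneg (T : S → A → S → ℝ) (R : S → A → ℝ) (π : S → A)
    (hT0 : ∀ s a s', 0 ≤ T s a s') (hR0 : ∀ s a, 0 ≤ R s a) :
    ∀ (n : ℕ) (s : S), 0 ≤ Vpol T R π n s := by
  intro n
  induction n with
  | zero => intro s; simp [Vpol]
  | succ n ih =>
    intro s
    simp only [Vpol]
    exact add_nonneg (hR0 _ _)
      (Finset.sum_nonneg fun s' _ => mul_nonneg (hT0 _ _ _) (ih s'))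

lemma Vpol_le (T : S → A → S → ℝ) (R : S → A → ℝ) (π : S → A) (Rmax : ℝ)
    (hT0 : ∀ s a s', 0 ≤ T s a s') (hT1 : ∀ s a, ∑ s', T s a s' = 1)
    (hR1 : ∀ s a, R s a ≤ Rmax) :
    ∀ (n : ℕ) (s : S), Vpol T R π n s ≤ (n : ℝ) * Rmax := by
  intro n
  induction n with
  | zero => intro s; simp [Vpol]
  | succ n ih =>
    intro s
    simp only [Vpol]
    have h1 : ∑ s' : S, T s (π s) s' * Vpol T R π n s'
        ≤ ∑ s' : S, T s (π s) s' * ((n : ℝ) * Rmax) :=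
      Finset.sum_le_sum fun s' _ =>
        mul_le_mul_of_nonneg_left (ih s') (hT0 _ _ _)
    rw [← Finset.sum_mul, hT1 s (π s), one_mul] at h1
    have h2 := hR1 s (π s)
    push_cast
    linarith

lemma val_ineq (T TL : S → A → S → ℝ) (R RL : S → A → ℝ) (Rmax : ℝ)
    (hRmax : 0 < Rmax)
    (hT0 : ∀ s a s', 0 ≤ T s a s') (hT1 : ∀ s a, ∑ s', T s a s' = 1)
    (hTL0 : ∀ s a s', 0 ≤ TL s a s') (hTL1 : ∀ s a, ∑ s', TL s a s' = 1)
    (hR0 : ∀ s a, 0 ≤ R s a) (hR1 : ∀ s a, R s a ≤ Rmax)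
    (hRL0 : ∀ s a, 0 ≤ RL s a) (hRL1 : ∀ s a, RL s a ≤ Rmax)
    (L : Finset (S × A))
    (hTagree : ∀ s a, (s, a) ∈ L → ∀ s', T s a s' = TL s a s')
    (hRagree : ∀ s a, (s, a) ∈ L → R s a = RL s a)
    (π : S → A) :
    ∀ (n : ℕ) (s : S),
      Vpol TL RL π n s - (n : ℝ) * Rmax * Esc T π L n s ≤ Vpol T R π n s := by
  intro n
  induction n with
  | zero => intro s; simp [Vpol, Esc]
  | succ n ih =>
    intro s
    by_cases hL : (s, π s) ∈ L
    · have hEsc : Esc T π L (n+1) s = ∑ s' : S, T s (π s) s' * Esc T π L n s' := by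
        simp [Esc, hL]
      rw [hEsc]
      simp only [Vpol]
      rw [← hRagree s (π s) hL]
      have hTsum : ∑ s' : S, TL s (π s) s' * Vpol TL RL π n s'
          = ∑ s' : S, T s (π s) s' * Vpol TL RL π n s' :=
        Finset.sum_congr rfl fun s' _ => by rw [← hTagree s (π s) hL s']
      rw [hTsum]
      have h1 : ∀ s' : S, T s (π s) s' * Vpol TL RL π n s'
          - (n : ℝ) * Rmax * (T s (π s) s' * Esc T π L n s')
          ≤ T s (π s) s' * Vpol T R π n s' := by
        intro s'
        have h2 := mul_le_mul_of_nonneg_left (ih s') (hT0 s (π s) s')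
        nlinarith [h2]
      have hsum : ∑ s' : S, T s (π s) s' * Vpol TL RL π n s'
          - (n : ℝ) * Rmax * ∑ s' : S, T s (π s) s' * Esc T π L n s'
          ≤ ∑ s' : S, T s (π s) s' * Vpol T R π n s' := by
        rw [Finset.mul_sum, ← Finset.sum_sub_distrib]
        exact Finset.sum_le_sum fun s' _ => h1 s'
      have hc0 : 0 ≤ ∑ s' : S, T s (π s) s' * Esc T π L n s' :=
        Finset.sum_nonneg fun s' _ =>
          mul_nonneg (hT0 _ _ _) (Esc_nonneg T π L hT0 n s')
      have hmono : (n : ℝ) * Rmax * ∑ s' : S, T s (π s) s' * Esc T π L n s'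
          ≤ ((n : ℝ) + 1) * Rmax * ∑ s' : S, T s (π s) s' * Esc T π L n s' := by
        apply mul_le_mul_of_nonneg_right _ hc0
        apply mul_le_mul_of_nonneg_right _ hRmax.le
        linarith
      push_cast
      linarith
    · have hEsc : Esc T π L (n+1) s = 1 := by simp [Esc, hL]
      rw [hEsc]
      have h1 := Vpol_le TL RL π Rmax hTL0 hTL1 hRL1 (n+1) s
      have h2 := Vpol_nonneg T R π hT0 hR0 (n+1) s
      push_cast at h1 ⊢
      linarith

end Aux


theorem stmt12 {S A : Type*} [Fintype S] [Fintype A] [Nonempty S] [Nonempty A]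
    [DecidableEq S] [DecidableEq A]
    -- two MDPs M and M_L on the same state and action sets, rewards in [0, Rmax]
    (T TL : S → A → S → ℝ) (R RL : S → A → ℝ) (Rmax : ℝ) (hRmax : 0 < Rmax)
    (hT0 : ∀ s a s', 0 ≤ T s a s') (hT1 : ∀ s a, ∑ s', T s a s' = 1)
    (hTL0 : ∀ s a s', 0 ≤ TL s a s') (hTL1 : ∀ s a, ∑ s', TL s a s' = 1)
    (hR0 : ∀ s a, 0 ≤ R s a) (hR1 : ∀ s a, R s a ≤ Rmax)
    (hRL0 : ∀ s a, 0 ≤ RL s a) (hRL1 : ∀ s a, RL s a ≤ Rmax)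
    -- the set L of known state-action pairs, on which M and M_L agree
    (L : Finset (S × A))
    (hTagree : ∀ s a, (s, a) ∈ L → ∀ s', T s a s' = TL s a s')
    (hRagree : ∀ s a, (s, a) ∈ L → R s a = RL s a)
    -- a policy, a start state, and a horizon n ≥ 1
    (π : S → A) (s₁ : S) (n : ℕ) (hn : 1 ≤ n) :
    -- V^{π,n}_M(s₁) ≥ V^{π,n}_{M_L}(s₁) − n·Rmax·Pr(A_M), where Pr(A_M) is the
    -- probability, over n-step trajectories of π in M started at s₁, of visiting
    -- some state s_t with (s_t, π s_t) ∉ L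
    Vpol T R π n s₁ ≥ Vpol TL RL π n s₁ - (n : ℝ) * Rmax *
      (∑ p : Fin n → S,
        ((if p ⟨0, hn⟩ = s₁ then (1 : ℝ) else 0) *
          ∏ t : Fin (n - 1),
            T (p ⟨t.1, by have ht := t.2; omega⟩) (π (p ⟨t.1, by have ht := t.2; omega⟩))
              (p ⟨t.1 + 1, by have ht := t.2; omega⟩)) *
        (if ∃ t : Fin n, (p t, π (p t)) ∉ L then 1 else 0)) := by
  obtain ⟨m, rfl⟩ : ∃ m, n = m + 1 := ⟨n - 1, by omega⟩
  have hkey := key' T π L hT1 m s₁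
  have hval := val_ineq T TL R RL Rmax hRmax hT0 hT1 hTL0 hTL1 hR0 hR1 hRL0 hRL1
    L hTagree hRagree π (m+1) s₁
  show Vpol T R π (m+1) s₁ ≥ Vpol TL RL π (m+1) s₁ - ((m+1 : ℕ) : ℝ) * Rmax *
      (∑ p : Fin (m+1) → S,
        ((if p 0 = s₁ then (1 : ℝ) else 0) * W T π m p) *
        (if ∃ t : Fin (m+1), (p t, π (p t)) ∉ L then 1 else 0))
  rw [hkey]
  exact hval
end
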